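/- For every real c > 0, the sequence of functions x ↦ (1/n) · F_n''(x) converges to 0 uniformly on the half-line [c, ∞) as n → ∞, where F_n'' is the second derivative of F_n(x) = log(∑_{j=0}^n e^{jx}). -/

import Mathlib

/-!
`F_n''(x)` is the variance of `j` under the weights `e^{jx} / ∑_i e^{ix}` on `{0, …, n}`, so it is
at most the mean squared distance of `j` from `n`. Since these weights are at most `e^{-(n-j)x}`,
for `x ≥ c > 0` this is bounded by `∑_k k² e^{-kc} < ∞`, independently of `n` and `x`.
-/

open Filter Finset Real

lemma sum_sq_mul_mul_sum_sub_sq_le {ι R : Type*} [CommRing R] [LinearOrder R]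
    [IsStrictOrderedRing R] (s : Finset ι) (f w : ι → R) (a : R) :
    (∑ i ∈ s, f i ^ 2 * w i) * (∑ i ∈ s, w i) - (∑ i ∈ s, f i * w i) ^ 2 ≤
      (∑ i ∈ s, w i) * ∑ i ∈ s, (f i - a) ^ 2 * w i := by
  have expand : ∑ i ∈ s, (f i - a) ^ 2 * w i =
      ∑ i ∈ s, f i ^ 2 * w i - 2 * a * ∑ i ∈ s, f i * w i + a ^ 2 * ∑ i ∈ s, w i := by
    simp only [mul_sum, ← sum_sub_distrib, ← sum_add_distrib]
    exact sum_congr rfl fun i _ => by ring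
  rw [expand]
  nlinarith [sq_nonneg (∑ i ∈ s, f i * w i - a * ∑ i ∈ s, w i)]

lemma tendstoUniformlyOn_zero_of_abs_le {ι α : Type*} {l : Filter ι} {F : ι → α → ℝ} {s : Set α}
    {u : ι → ℝ} (hu : Tendsto u l (nhds 0)) (hF : ∀ᶠ i in l, ∀ x ∈ s, |F i x| ≤ u i) :
    TendstoUniformlyOn F (fun _ => 0) l s := by
  refine Metric.tendstoUniformlyOn_iff.2 fun ε hε => ?_
  filter_upwards [hF, hu.eventually (gt_mem_nhds hε)] with i hFi hui x hx
  rw [dist_zero_left, Real.norm_eq_abs]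
  exact (hFi x hx).trans_lt hui

noncomputable section

def logSumExp (n : ℕ) (y : ℝ) : ℝ :=
  log (∑ j ∈ range (n + 1), exp (j * y))

def expMoment (n k : ℕ) (x : ℝ) : ℝ :=
  ∑ j ∈ range (n + 1), (j : ℝ) ^ k * exp (j * x)

variable (n : ℕ) (x : ℝ)

lemma hasDerivAt_expMoment (k : ℕ) : HasDerivAt (expMoment n k) (expMoment n (k + 1) x) x := by
  refine HasDerivAt.fun_sum fun j _ => ?_
  exact (((hasDerivAt_id' x).const_mul (j : ℝ)).exp.const_mul ((j : ℝ) ^ k)).congr_deriv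
    (by ring)

lemma expMoment_zero_pos : 0 < expMoment n 0 x :=
  sum_pos (fun j _ => by positivity) nonempty_range_add_one

lemma logSumExp_eq : logSumExp n = fun y => log (expMoment n 0 y) := by
  funext y
  simp [logSumExp, expMoment]

lemma deriv_deriv_logSumExp :
    deriv (deriv (logSumExp n)) x =
      (expMoment n 2 x * expMoment n 0 x - expMoment n 1 x ^ 2) / expMoment n 0 x ^ 2 := by
  have deriv_logSumExp : deriv (logSumExp n) = fun y => expMoment n 1 y / expMoment n 0 y := by
    funext y
    rw [logSumExp_eq]
    exact ((hasDerivAt_expMoment n y 0).log (expMoment_zero_pos n y).ne').deriv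
  rw [deriv_logSumExp, ((hasDerivAt_expMoment n x 1).fun_div (hasDerivAt_expMoment n x 0)
    (expMoment_zero_pos n x).ne').deriv]
  ring

lemma deriv_deriv_logSumExp_nonneg : 0 ≤ deriv (deriv (logSumExp n)) x := by
  rw [deriv_deriv_logSumExp]
  refine div_nonneg (sub_nonneg.2 ?_) (sq_nonneg _)
  rw [mul_comm]
  refine sum_sq_le_sum_mul_sum_of_sq_le_mul _ (fun j _ => by positivity)
    (fun j _ => by positivity) fun j _ => le_of_eq ?_
  rw [pow_zero, one_mul, mul_pow, sq (exp _)]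
  ring

lemma sum_sub_sq_mul_exp_eq :
    ∑ j ∈ range (n + 1), ((j : ℝ) - n) ^ 2 * exp (j * x) =
      exp (n * x) * ∑ k ∈ range (n + 1), (k : ℝ) ^ 2 * exp (-x) ^ k := by
  rw [← sum_range_reflect, mul_sum]
  refine sum_congr rfl fun j hj => ?_
  have hjn : j ≤ n := Nat.lt_succ_iff.1 (mem_range.1 hj)
  rw [add_tsub_cancel_right, Nat.cast_sub hjn, ← exp_nat_mul, mul_left_comm, ← exp_add]
  ring_nf

lemma deriv_deriv_logSumExp_le :
    deriv (deriv (logSumExp n)) x ≤ ∑ k ∈ range (n + 1), (k : ℝ) ^ 2 * exp (-x) ^ k := by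
  set S := expMoment n 0 x
  have hS : 0 < S := expMoment_zero_pos n x
  have hnS : exp (n * x) ≤ S := by
    simpa [S, expMoment] using single_le_sum (f := fun j : ℕ => exp (j * x))
      (fun j _ => by positivity) (self_mem_range_succ n)
  have variance_le := sum_sq_mul_mul_sum_sub_sq_le (range (n + 1)) (fun j => (j : ℝ))
    (fun j => exp (j * x)) n
  rw [deriv_deriv_logSumExp, div_le_iff₀ (by positivity)]
  calc expMoment n 2 x * S - expMoment n 1 x ^ 2
      ≤ S * ∑ j ∈ range (n + 1), ((j : ℝ) - n) ^ 2 * exp (j * x) := by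
        simpa [S, expMoment] using variance_le
    _ = S * (exp (n * x) * ∑ k ∈ range (n + 1), (k : ℝ) ^ 2 * exp (-x) ^ k) := by
        rw [sum_sub_sq_mul_exp_eq]
    _ ≤ S * (S * ∑ k ∈ range (n + 1), (k : ℝ) ^ 2 * exp (-x) ^ k) := by
        gcongr
    _ = _ := by ring

lemma deriv_deriv_logSumExp_le_tsum {c : ℝ} (hc : 0 < c) (hx : c ≤ x) :
    deriv (deriv (logSumExp n)) x ≤ ∑' k : ℕ, (k : ℝ) ^ 2 * exp (-c) ^ k := by
  have hsummable : Summable fun k : ℕ => (k : ℝ) ^ 2 * exp (-c) ^ k :=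
    summable_pow_mul_geometric_of_norm_lt_one 2 (by simpa [abs_of_pos (exp_pos _)] using hc)
  calc deriv (deriv (logSumExp n)) x
      ≤ ∑ k ∈ range (n + 1), (k : ℝ) ^ 2 * exp (-x) ^ k := deriv_deriv_logSumExp_le n x
    _ ≤ ∑ k ∈ range (n + 1), (k : ℝ) ^ 2 * exp (-c) ^ k := by gcongr
    _ ≤ _ := hsummable.sum_le_tsum _ fun k _ => by positivity

end

/-- For every real `c > 0`, the functions `x ↦ (1/n) · F_n''(x)` converge to `0` uniformly on
`[c, ∞)` as `n → ∞`, where `F_n(x) = log (∑_{j=0}^n e^{jx})`. -/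
theorem tendstoUniformlyOn_second_deriv_log_sum_exp_Ici (c : ℝ) (hc : 0 < c) :
    TendstoUniformlyOn
      (fun (n : ℕ) (x : ℝ) =>
        (1 / (n : ℝ)) *
          deriv (deriv (fun y : ℝ =>
            Real.log (∑ j ∈ Finset.range (n + 1), Real.exp (j * y)))) x)
      (fun _ => 0) atTop (Set.Ici c) := by
  refine tendstoUniformlyOn_zero_of_abs_le
    (tendsto_const_div_atTop_nhds_zero_nat (∑' k : ℕ, (k : ℝ) ^ 2 * exp (-c) ^ k))
    (Eventually.of_forall fun n x hx => ?_)
  change |1 / (n : ℝ) * deriv (deriv (logSumExp n)) x| ≤ _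
  rw [abs_of_nonneg (mul_nonneg (by positivity) (deriv_deriv_logSumExp_nonneg n x)),
    one_div_mul_eq_div]
  exact div_le_div_of_nonneg_right (deriv_deriv_logSumExp_le_tsum n x hc hx) n.cast_nonneg
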